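/- Let P and Q be probability mass functions on a finite alphabet V. Define the speculative sampling procedure: draw x ~ Q, accept x with probability min(1, P(x)/Q(x)); upon rejection, sample a replacement token from the residual distribution R(y) = max(0, P(y) - Q(y)) / Σ_z max(0, P(z) - Q(z)) (assuming P ≠ Q so the normalizer is positive). Then the output token of this procedure is distributed exactly according to P. -/

import Mathlib

/-!
The accepted mass at `y` is `Q y * min 1 (P y / Q y) = min (Q y) (P y)`. The total rejected mass
`∑ (Q - min Q P)` equals `∑ (P - min Q P) = ∑ max 0 (P - Q)` because `P` and `Q` have the same
total mass, so it cancels the normalizer of the residual, and the rejection branch contributes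
`max 0 (P y - Q y) = P y - min (Q y) (P y)`.
-/

open Finset

lemma mul_min_one_div {p q : ℝ} (hp : 0 ≤ p) (hq : 0 ≤ q) : q * min 1 (p / q) = min q p := by
  rcases hq.eq_or_lt with rfl | hq
  · simp [hp]
  · rw [mul_min_of_nonneg _ _ hq.le, mul_one, mul_div_cancel₀ _ hq.ne']

lemma max_zero_sub_eq_sub_min (a b : ℝ) : max 0 (a - b) = a - min b a := by
  rw [sub_inf, sub_self, max_comm]

section

variable {ι : Type*} [Fintype ι] {p q : ι → ℝ}

lemma exists_lt_of_sum_eq_of_ne (hsum : ∑ i, p i = ∑ i, q i) (hne : p ≠ q) : ∃ i, q i < p i := by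
  by_contra! hle
  exact hne (funext fun i => (sum_eq_sum_iff_of_le fun j _ => hle j).mp hsum i (mem_univ i))

lemma sum_max_zero_sub_pos (hsum : ∑ i, p i = ∑ i, q i) (hne : p ≠ q) :
    0 < ∑ i, max 0 (p i - q i) := by
  obtain ⟨i, hi⟩ := exists_lt_of_sum_eq_of_ne hsum hne
  exact sum_pos' (fun j _ => le_max_left _ _) ⟨i, mem_univ i, lt_max_of_lt_right (sub_pos.mpr hi)⟩

lemma sum_mul_one_sub_min_one_div (hp : ∀ i, 0 ≤ p i) (hq : ∀ i, 0 ≤ q i)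
    (hsum : ∑ i, p i = ∑ i, q i) :
    ∑ i, q i * (1 - min 1 (p i / q i)) = ∑ i, max 0 (p i - q i) := by
  have hrej : ∀ i, q i * (1 - min 1 (p i / q i)) = q i - min (q i) (p i) := fun i => by
    rw [mul_sub, mul_one, mul_min_one_div (hp i) (hq i)]
  simp only [hrej, max_zero_sub_eq_sub_min, sum_sub_distrib, hsum]

end

/-- Speculative sampling is exact: drawing `x ~ Q`, accepting with probability
`min 1 (P x / Q x)`, and on rejection resampling from the normalized residual
`max 0 (P - Q)`, yields output distributed exactly as `P`. -/
theorem speculative_sampling_exact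
    {V : Type*} [Fintype V] (P Q : V → ℝ)
    (hP0 : ∀ x, 0 ≤ P x) (hQ0 : ∀ x, 0 ≤ Q x)
    (hP1 : ∑ x, P x = 1) (hQ1 : ∑ x, Q x = 1)
    (hne : P ≠ Q) (y : V) :
    Q y * min 1 (P y / Q y)
      + (∑ x, Q x * (1 - min 1 (P x / Q x)))
          * (max 0 (P y - Q y) / ∑ z, max 0 (P z - Q z)) = P y := by
  have hsum : ∑ x, P x = ∑ x, Q x := hP1.trans hQ1.symm
  rw [sum_mul_one_sub_min_one_div hP0 hQ0 hsum,
    mul_div_cancel₀ _ (sum_max_zero_sub_pos hsum hne).ne', mul_min_one_div (hP0 y) (hQ0 y),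
    max_zero_sub_eq_sub_min, add_sub_cancel]
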